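/- Let C be a category with an initial object 0 and colimits of ω-chains, and let F : C ⥤ C preserve colimits of ω-chains. Let X∞ be the colimit of the chain 0 → F 0 → F² 0 → ⋯ whose connecting morphisms are obtained by applying F repeatedly to the unique morphism 0 → F 0. Then the canonical morphism from the colimit of the shifted chain F 0 → F² 0 → ⋯ to F X∞ induced by the preservation of the colimit is an isomorphism, so X∞ ≅ F X∞. -/

import Mathlib

open CategoryTheory CategoryTheory.Limits

/-- Objects `Fⁿ 0` of the initial chain of the endofunctor `F`. -/
noncomputable def chainObj {C : Type u} [Category.{v} C] [HasInitial C] (F : C ⥤ C) : ℕ → C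
  | 0 => ⊥_ C
  | n + 1 => F.obj (chainObj F n)

/-- Connecting morphisms `Fⁿ 0 ⟶ F^(n+1) 0` of the initial chain of `F`:
`i₀ : 0 ⟶ F 0` is the unique morphism from the initial object and
`i_(n+1) = F i_n`. -/
noncomputable def chainMap {C : Type u} [Category.{v} C] [HasInitial C] (F : C ⥤ C) :
    ∀ n : ℕ, chainObj F n ⟶ chainObj F (n + 1)
  | 0 => initial.to _
  | n + 1 => F.map (chainMap F n)

/-- The initial chain `0 ⟶ F 0 ⟶ F² 0 ⟶ ⋯` of `F`, as a functor `ℕ ⥤ C`. -/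
noncomputable def initialChain {C : Type u} [Category.{v} C] [HasInitial C] (F : C ⥤ C) : ℕ ⥤ C :=
  CategoryTheory.Functor.ofSequence (chainMap F)

/-!
Since `F` preserves colimits of ω-chains, `F X∞` is the colimit of `F` applied to the initial
chain, and that is the initial chain shifted by one step. Precomposing with the final functor
`n ↦ n + 1` does not change the colimit, so `X∞ ≅ F X∞`.
-/

universe v₁ v₂ u₁ u₂

namespace CategoryTheory

def succFunctor : ℕ ⥤ ℕ :=
  Monotone.functor (f := (· + 1)) fun _ _ h => Nat.add_le_add_right h 1

instance : succFunctor.Final :=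
  (Monotone.final_functor_iff _).2 fun n => ⟨n, Nat.le_succ n⟩

variable {C : Type u₁} [Category.{v₁} C]

def NatIso.ofSequence {G H : ℕ ⥤ C} (e : ∀ n, G.obj n ≅ H.obj n)
    (naturality : ∀ n, G.map (homOfLE (n.le_add_right 1)) ≫ (e (n + 1)).hom =
      (e n).hom ≫ H.map (homOfLE (n.le_add_right 1))) : G ≅ H :=
  NatIso.ofComponents e fun φ => (NatTrans.ofSequence (fun n => (e n).hom) naturality).naturality φ

def Functor.succCompOfSequenceIso {X : ℕ → C} (f : ∀ n, X n ⟶ X (n + 1)) :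
    succFunctor ⋙ Functor.ofSequence f ≅ Functor.ofSequence (fun n => f (n + 1)) :=
  NatIso.ofSequence (fun _ => Iso.refl _) fun n =>
    (Category.comp_id _).trans <| (Functor.ofSequence_map_homOfLE_succ f (n + 1)).trans <|
      (Functor.ofSequence_map_homOfLE_succ (fun n => f (n + 1)) n).symm.trans
        (Category.id_comp _).symm

def Functor.ofSequenceCompIso {D : Type u₂} [Category.{v₂} D] {X : ℕ → C}
    (f : ∀ n, X n ⟶ X (n + 1)) (F : C ⥤ D) :
    Functor.ofSequence f ⋙ F ≅ Functor.ofSequence (fun n => F.map (f n)) :=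
  NatIso.ofSequence (fun _ => Iso.refl _) fun n =>
    (Category.comp_id _).trans <|
      (congrArg F.map (Functor.ofSequence_map_homOfLE_succ f n)).trans <|
      (Functor.ofSequence_map_homOfLE_succ (fun n => F.map (f n)) n).symm.trans
        (Category.id_comp _).symm

noncomputable def Limits.colimitIsoObjColimitOfFinal {J : Type*} [Category J] (Φ : J ⥤ J)
    [Φ.Final] {G : J ⥤ C} {F : C ⥤ C} (e : Φ ⋙ G ≅ G ⋙ F) [HasColimit G] [PreservesColimit G F] :
    colimit G ≅ F.obj (colimit G) :=
  (Functor.Final.colimitIso Φ G).symm ≪≫ HasColimit.isoOfNatIso e ≪≫ asIso (colimit.post G F)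

end CategoryTheory

-- `chainMap F (n + 1)` is `F.map (chainMap F n)` by definition, so the two sequences agree.
noncomputable def succCompInitialChainIso {C : Type u₁} [Category.{v₁} C] [HasInitial C]
    (F : C ⥤ C) : succFunctor ⋙ initialChain F ≅ initialChain F ⋙ F :=
  Functor.succCompOfSequenceIso (chainMap F) ≪≫ (Functor.ofSequenceCompIso (chainMap F) F).symm

/-- If `C` has an initial object and colimits of ω-chains and `F` preserves
them, then, with `X∞` the colimit of the initial chain of `F`, the canonical
morphism from the colimit of the shifted chain `F 0 ⟶ F² 0 ⟶ ⋯` to `F X∞`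
induced by preservation of the colimit is an isomorphism, so `X∞ ≅ F X∞`. -/
theorem initial_chain_fixed_point {C : Type u} [Category.{v} C] [HasInitial C]
    [HasColimitsOfShape ℕ C] (F : C ⥤ C) [PreservesColimitsOfShape ℕ F] :
    IsIso (colimit.desc (initialChain F ⋙ F)
        (F.mapCocone (colimit.cocone (initialChain F)))) ∧
      Nonempty (colimit (initialChain F) ≅ F.obj (colimit (initialChain F))) := by
  exact ⟨inferInstanceAs (IsIso (colimit.post (initialChain F) F)),
      ⟨colimitIsoObjColimitOfFinal succFunctor (succCompInitialChainIso F)⟩⟩
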